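/- arXiv:0907.3391 — 2 statements merged into one kernel-verified Lean document; each statement's English description precedes it below -/
import Mathlib

section
/- Let (A,≺,≻) be a finite-dimensional pre-alternative algebra over a field of characteristic ≠ 2 and let r ∈ A⊗A be symmetric and nondegenerate (so T_r: A* → A is invertible). Define the bilinear form B on A by B(x,y) = ⟨T_r⁻¹(x), y⟩. Then r is a solution of the PA-equations if and only if B is a 2-cocycle of (A,≺,≻), i.e., B(x∘y, z) = B(x, y≻z) + B(y, z≺x) for all x,y,z ∈ A, where x∘y = x≺y + x≻y. -/
open TensorProduct

universe u v w

variable {k : Type u} [Field k]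

section Defs

variable {M : Type v} {V : Type w} [AddCommGroup M] [Module k M] [AddCommGroup V] [Module k V]

/-- Alternative algebra: both alternative laws. -/
def IsAlt (m : M →ₗ[k] M →ₗ[k] M) : Prop :=
  (∀ x y : M, m (m x x) y = m x (m x y)) ∧ (∀ x y : M, m (m y x) x = m y (m x x))

/-- right associator -/
def rAssoc (p s : M →ₗ[k] M →ₗ[k] M) (x y z : M) : M :=
  p (p x y) z - p x (p y z + s y z)

/-- middle associator -/
def mAssoc (p s : M →ₗ[k] M →ₗ[k] M) (x y z : M) : M :=
  p (s x y) z - s x (p y z)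

/-- left associator -/
def lAssoc (p s : M →ₗ[k] M →ₗ[k] M) (x y z : M) : M :=
  s (p x y + s x y) z - s x (s y z)

/-- Pre-alternative algebra. -/
def IsPreAlt (p s : M →ₗ[k] M →ₗ[k] M) : Prop :=
  (∀ x y z : M, mAssoc p s x y z + rAssoc p s y x z = 0) ∧
  (∀ x y z : M, mAssoc p s x y z + lAssoc p s x z y = 0) ∧
  (∀ x y : M, rAssoc p s y x x = 0) ∧
  (∀ x y : M, lAssoc p s x x y = 0)

/-- Bimodule of an alternative algebra. -/
def IsAltBimod (m : M →ₗ[k] M →ₗ[k] M) (L R : M →ₗ[k] Module.End k V) : Prop :=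
  (∀ x : M, L (m x x) = L x * L x) ∧
  (∀ x : M, R (m x x) = R x * R x) ∧
  (∀ x y : M, R y * L x - L x * R y = R (m x y) - R y * R x) ∧
  (∀ x y : M, L (m y x) - L y * L x = L y * R x - R x * L y)

/-- Bimodule of a pre-alternative algebra. -/
def IsPreAltBimod (p s : M →ₗ[k] M →ₗ[k] M) (Lp Rp Ls Rs : M →ₗ[k] Module.End k V) : Prop :=
  (∀ x y : M, Ls ((p x y + s x y) + (p y x + s y x)) = Ls x * Ls y + Ls y * Ls x) ∧
  (∀ x y : M, Rs y * ((Lp x + Ls x) + (Rp x + Rs x)) = Ls x * Rs y + Rs (s x y)) ∧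
  (∀ x y : M, Rp y * Ls x + Rp y * Rp x = Ls x * Rp y + Rp (p x y + s x y)) ∧
  (∀ x y : M, Rp y * Rs x + Rp y * Lp x = Rs (p x y) + Lp x * (Rp y + Rs y)) ∧
  (∀ x y : M, Lp (s x y) + Lp (p y x) = Ls x * Lp y + Lp y * (Lp x + Ls x)) ∧
  (∀ x y : M, Ls (p y x + s y x) + Rp x * Ls y = Ls y * Ls x + Ls y * Rp x) ∧
  (∀ x y : M, Rs y * (Rp x + Rs x) + Rp x * Rs y = Rs (s x y) + Rs (p y x)) ∧
  (∀ x y : M, Rs x * (Lp y + Ls y) + Lp (s y x) = Ls y * Rs x + Ls y * Lp x) ∧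
  (∀ x y : M, Rp y * Rp x + Rp x * Rp y = Rp ((p x y + s x y) + (p y x + s y x))) ∧
  (∀ x y : M, Rp y * Lp x + Lp (p x y) = Lp x * ((Rp y + Rs y) + (Lp y + Ls y)))

/-- Dual family of endomorphisms: `(dualT L) x = (L x)^*`. -/
noncomputable def dualT (L : M →ₗ[k] Module.End k V) :
    M →ₗ[k] Module.End k (Module.Dual k V) :=
  (Module.Dual.transpose (R := k) (M := V) (M' := V)) ∘ₗ L

/-- The linear map `A* → A` associated to an element of `A ⊗ A`:
`⟨u* ⊗ v*, r⟩ = ⟨u*, T_r v*⟩`, i.e. `T_r(v*) = Σ v*(bᵢ) • aᵢ`. -/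
noncomputable def Tr : (M ⊗[k] M) →ₗ[k] Module.Dual k M →ₗ[k] M :=
  TensorProduct.lift (LinearMap.mk₂ k
    (fun a b => (Module.Dual.eval k M b).smulRight a)
    (fun a a' b => by ext f; simp)
    (fun c a b => by ext f; simp only [LinearMap.smulRight_apply, LinearMap.smul_apply,
      Module.Dual.eval_apply]; exact smul_comm _ _ _)
    (fun a b b' => by ext f; simp [add_smul])
    (fun c a b => by ext f; simp [map_smul, mul_smul]))

noncomputable def tlift (m : M →ₗ[k] M →ₗ[k] M) : M ⊗[k] M →ₗ[k] M := TensorProduct.lift m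

/-- `r₁₂ ⋄ r₁₃` : `(a⊗b)⊗(c⊗d) ↦ (a⋄c)⊗b⊗d`. -/
noncomputable def comp12_13 (m : M →ₗ[k] M →ₗ[k] M) :
    (M ⊗[k] M) ⊗[k] (M ⊗[k] M) →ₗ[k] M ⊗[k] (M ⊗[k] M) :=
  (TensorProduct.map (tlift m) LinearMap.id) ∘ₗ
    (TensorProduct.tensorTensorTensorComm k M M M M).toLinearMap

/-- `r₁₃ ⋄ r₁₂` : `(a⊗b)⊗(c⊗d) ↦ (a⋄c)⊗d⊗b`. -/
noncomputable def comp13_12 (m : M →ₗ[k] M →ₗ[k] M) :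
    (M ⊗[k] M) ⊗[k] (M ⊗[k] M) →ₗ[k] M ⊗[k] (M ⊗[k] M) :=
  (TensorProduct.map (tlift m) (TensorProduct.comm k M M).toLinearMap) ∘ₗ
    (TensorProduct.tensorTensorTensorComm k M M M M).toLinearMap

/-- `r₁₂ ⋄ r₂₃` : `(a⊗b)⊗(c⊗d) ↦ a⊗(b⋄c)⊗d`. -/
noncomputable def comp12_23 (m : M →ₗ[k] M →ₗ[k] M) :
    (M ⊗[k] M) ⊗[k] (M ⊗[k] M) →ₗ[k] M ⊗[k] (M ⊗[k] M) :=
  (TensorProduct.map LinearMap.id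
      ((TensorProduct.map (tlift m) LinearMap.id) ∘ₗ
        (TensorProduct.assoc k M M M).symm.toLinearMap)) ∘ₗ
    (TensorProduct.assoc k M M (M ⊗[k] M)).toLinearMap

/-- `r₂₃ ⋄ r₁₂` : `(a⊗b)⊗(c⊗d) ↦ c⊗(a⋄d)⊗b`. -/
noncomputable def comp23_12 (m : M →ₗ[k] M →ₗ[k] M) :
    (M ⊗[k] M) ⊗[k] (M ⊗[k] M) →ₗ[k] M ⊗[k] (M ⊗[k] M) :=
  (TensorProduct.map LinearMap.id
      ((TensorProduct.map (tlift m.flip) LinearMap.id) ∘ₗ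
        (TensorProduct.assoc k M M M).symm.toLinearMap)) ∘ₗ
    (TensorProduct.assoc k M M (M ⊗[k] M)).toLinearMap ∘ₗ
    (TensorProduct.comm k (M ⊗[k] M) (M ⊗[k] M)).toLinearMap

/-- `r₁₃ ⋄ r₂₃` : `(a⊗b)⊗(c⊗d) ↦ a⊗c⊗(b⋄d)`. -/
noncomputable def comp13_23 (m : M →ₗ[k] M →ₗ[k] M) :
    (M ⊗[k] M) ⊗[k] (M ⊗[k] M) →ₗ[k] M ⊗[k] (M ⊗[k] M) :=
  (TensorProduct.map LinearMap.id (TensorProduct.map LinearMap.id (tlift m))) ∘ₗ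
    (TensorProduct.assoc k M M (M ⊗[k] M)).toLinearMap ∘ₗ
    (TensorProduct.tensorTensorTensorComm k M M M M).toLinearMap

/-- `r₂₃ ⋄ r₁₃` : `(a⊗b)⊗(c⊗d) ↦ c⊗a⊗(b⋄d)`. -/
noncomputable def comp23_13 (m : M →ₗ[k] M →ₗ[k] M) :
    (M ⊗[k] M) ⊗[k] (M ⊗[k] M) →ₗ[k] M ⊗[k] (M ⊗[k] M) :=
  (TensorProduct.map LinearMap.id (TensorProduct.map LinearMap.id (tlift m))) ∘ₗ
    (TensorProduct.assoc k M M (M ⊗[k] M)).toLinearMap ∘ₗ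
    (TensorProduct.map (TensorProduct.comm k M M).toLinearMap LinearMap.id) ∘ₗ
    (TensorProduct.tensorTensorTensorComm k M M M M).toLinearMap

/-- The alternative Yang–Baxter expression `r₂₃∘r₁₂ − r₁₂∘r₁₃ − r₁₃∘r₂₃`. -/
noncomputable def ayb (m : M →ₗ[k] M →ₗ[k] M) (r : M ⊗[k] M) : M ⊗[k] (M ⊗[k] M) :=
  comp23_12 m (r ⊗ₜ r) - comp12_13 m (r ⊗ₜ r) - comp13_23 m (r ⊗ₜ r)

/-- PA-equations. -/
noncomputable def PA11 (p s : M →ₗ[k] M →ₗ[k] M) (r : M ⊗[k] M) : M ⊗[k] (M ⊗[k] M) :=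
  comp12_13 (p + s) (r ⊗ₜ r) - comp23_12 s (r ⊗ₜ r) - comp13_23 p (r ⊗ₜ r)

noncomputable def PA12 (p s : M →ₗ[k] M →ₗ[k] M) (r : M ⊗[k] M) : M ⊗[k] (M ⊗[k] M) :=
  comp13_12 (p + s) (r ⊗ₜ r) - comp12_23 p (r ⊗ₜ r) - comp23_13 s (r ⊗ₜ r)

noncomputable def PA21 (p s : M →ₗ[k] M →ₗ[k] M) (r : M ⊗[k] M) : M ⊗[k] (M ⊗[k] M) :=
  comp12_23 (p + s) (r ⊗ₜ r) - comp23_13 p (r ⊗ₜ r) - comp13_12 s (r ⊗ₜ r)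

noncomputable def PA22 (p s : M →ₗ[k] M →ₗ[k] M) (r : M ⊗[k] M) : M ⊗[k] (M ⊗[k] M) :=
  comp23_12 (p + s) (r ⊗ₜ r) - comp13_23 s (r ⊗ₜ r) - comp12_13 p (r ⊗ₜ r)

noncomputable def PA31 (p s : M →ₗ[k] M →ₗ[k] M) (r : M ⊗[k] M) : M ⊗[k] (M ⊗[k] M) :=
  comp13_23 (p + s) (r ⊗ₜ r) - comp12_13 s (r ⊗ₜ r) - comp23_12 p (r ⊗ₜ r)

noncomputable def PA32 (p s : M →ₗ[k] M →ₗ[k] M) (r : M ⊗[k] M) : M ⊗[k] (M ⊗[k] M) :=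
  comp23_13 (p + s) (r ⊗ₜ r) - comp13_12 p (r ⊗ₜ r) - comp12_23 s (r ⊗ₜ r)

/-- Semidirect sum product on `M × V` for an alternative algebra `M` and a bimodule `(V,L,R)`. -/
def sd (m : M →ₗ[k] M →ₗ[k] M) (L R : M →ₗ[k] Module.End k V) :
    (M × V) →ₗ[k] (M × V) →ₗ[k] (M × V) :=
  LinearMap.mk₂ k (fun x y => (m x.1 y.1, L x.1 y.2 + R y.1 x.2))
    (fun x x' y => by refine Prod.ext ?_ ?_ <;> simp [map_add] <;> abel)
    (fun c x y => by refine Prod.ext ?_ ?_ <;> simp [map_smul, smul_add])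
    (fun x y y' => by refine Prod.ext ?_ ?_ <;> simp [map_add] <;> abel)
    (fun c x y => by refine Prod.ext ?_ ?_ <;> simp [map_smul, smul_add])

end Defs

section Aux

variable {A : Type v} [AddCommGroup A] [Module k A]

@[simp] lemma Tr_tmul (a b : A) (g : Module.Dual k A) :
    Tr (a ⊗ₜ[k] b) g = g b • a := by
  simp [Tr]

/-- The triple pairing of three dual vectors against `A ⊗ (A ⊗ A)`. -/
noncomputable def φ3 (g h l : Module.Dual k A) : Module.Dual k (A ⊗[k] (A ⊗[k] A)) :=
  TensorProduct.dualDistrib k A (A ⊗[k] A)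
    (g ⊗ₜ TensorProduct.dualDistrib k A A (h ⊗ₜ l))

@[simp] lemma φ3_tmul (g h l : Module.Dual k A) (a b c : A) :
    φ3 g h l (a ⊗ₜ (b ⊗ₜ c)) = g a * (h b * l c) := by
  simp [φ3]

lemma Tr_comm_pair (r : A ⊗[k] A) (g h : Module.Dual k A) :
    g (Tr r h) = h (Tr (TensorProduct.comm k A A r) g) := by
  induction r using TensorProduct.induction_on with
  | zero => simp
  | tmul a b => simp [mul_comm]
  | add u v hu hv => simp [map_add, hu, hv]

lemma φ3_comp12_13 (m : A →ₗ[k] A →ₗ[k] A) (g h l : Module.Dual k A) (r₁ r₂ : A ⊗[k] A) :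
    φ3 g h l (comp12_13 m (r₁ ⊗ₜ r₂)) = g (m (Tr r₁ h) (Tr r₂ l)) := by
  induction r₁ using TensorProduct.induction_on with
  | zero => simp [comp12_13]
  | add u v hu hv => simp only [add_tmul, map_add, hu, hv, LinearMap.add_apply]
  | tmul a b =>
    induction r₂ using TensorProduct.induction_on with
    | zero => simp [comp12_13]
    | add u v hu hv => simp only [tmul_add, map_add, hu, hv, LinearMap.add_apply]
    | tmul c d => simp [comp12_13, tlift, mul_comm, mul_left_comm, mul_assoc]

lemma φ3_comp13_12 (m : A →ₗ[k] A →ₗ[k] A) (g h l : Module.Dual k A) (r₁ r₂ : A ⊗[k] A) :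
    φ3 g h l (comp13_12 m (r₁ ⊗ₜ r₂)) = g (m (Tr r₁ l) (Tr r₂ h)) := by
  induction r₁ using TensorProduct.induction_on with
  | zero => simp [comp13_12]
  | add u v hu hv => simp only [add_tmul, map_add, hu, hv, LinearMap.add_apply]
  | tmul a b =>
    induction r₂ using TensorProduct.induction_on with
    | zero => simp [comp13_12]
    | add u v hu hv => simp only [tmul_add, map_add, hu, hv, LinearMap.add_apply]
    | tmul c d => simp [comp13_12, tlift, mul_comm, mul_left_comm, mul_assoc]

lemma φ3_comp12_23 (m : A →ₗ[k] A →ₗ[k] A) (g h l : Module.Dual k A) (r₁ r₂ : A ⊗[k] A) :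
    φ3 g h l (comp12_23 m (r₁ ⊗ₜ r₂)) =
      h (m (Tr (TensorProduct.comm k A A r₁) g) (Tr r₂ l)) := by
  induction r₁ using TensorProduct.induction_on with
  | zero => simp [comp12_23]
  | add u v hu hv => simp only [add_tmul, map_add, hu, hv, LinearMap.add_apply]
  | tmul a b =>
    induction r₂ using TensorProduct.induction_on with
    | zero => simp [comp12_23]
    | add u v hu hv => simp only [tmul_add, map_add, hu, hv, LinearMap.add_apply]
    | tmul c d => simp [comp12_23, tlift, mul_comm, mul_left_comm, mul_assoc]

lemma φ3_comp23_12 (m : A →ₗ[k] A →ₗ[k] A) (g h l : Module.Dual k A) (r₁ r₂ : A ⊗[k] A) :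
    φ3 g h l (comp23_12 m (r₁ ⊗ₜ r₂)) =
      h (m (Tr r₁ l) (Tr (TensorProduct.comm k A A r₂) g)) := by
  induction r₁ using TensorProduct.induction_on with
  | zero => simp [comp23_12]
  | add u v hu hv => simp only [add_tmul, map_add, hu, hv, LinearMap.add_apply]
  | tmul a b =>
    induction r₂ using TensorProduct.induction_on with
    | zero => simp [comp23_12]
    | add u v hu hv => simp only [tmul_add, map_add, hu, hv, LinearMap.add_apply]
    | tmul c d => simp [comp23_12, tlift, mul_comm, mul_left_comm, mul_assoc]

lemma φ3_comp13_23 (m : A →ₗ[k] A →ₗ[k] A) (g h l : Module.Dual k A) (r₁ r₂ : A ⊗[k] A) :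
    φ3 g h l (comp13_23 m (r₁ ⊗ₜ r₂)) =
      l (m (Tr (TensorProduct.comm k A A r₁) g) (Tr (TensorProduct.comm k A A r₂) h)) := by
  induction r₁ using TensorProduct.induction_on with
  | zero => simp [comp13_23]
  | add u v hu hv => simp only [add_tmul, map_add, hu, hv, LinearMap.add_apply]
  | tmul a b =>
    induction r₂ using TensorProduct.induction_on with
    | zero => simp [comp13_23]
    | add u v hu hv => simp only [tmul_add, map_add, hu, hv, LinearMap.add_apply]
    | tmul c d => simp [comp13_23, tlift, mul_comm, mul_left_comm, mul_assoc]

lemma φ3_comp23_13 (m : A →ₗ[k] A →ₗ[k] A) (g h l : Module.Dual k A) (r₁ r₂ : A ⊗[k] A) :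
    φ3 g h l (comp23_13 m (r₁ ⊗ₜ r₂)) =
      l (m (Tr (TensorProduct.comm k A A r₁) h) (Tr (TensorProduct.comm k A A r₂) g)) := by
  induction r₁ using TensorProduct.induction_on with
  | zero => simp [comp23_13]
  | add u v hu hv => simp only [add_tmul, map_add, hu, hv, LinearMap.add_apply]
  | tmul a b =>
    induction r₂ using TensorProduct.induction_on with
    | zero => simp [comp23_13]
    | add u v hu hv => simp only [tmul_add, map_add, hu, hv, LinearMap.add_apply]
    | tmul c d => simp [comp23_13, tlift, mul_comm, mul_left_comm, mul_assoc]

lemma φ3_sep [FiniteDimensional k A] (t : A ⊗[k] (A ⊗[k] A))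
    (ht : ∀ g h l : Module.Dual k A, φ3 g h l t = 0) : t = 0 := by
  rw [← Module.forall_dual_apply_eq_zero_iff k]
  intro ψ
  obtain ⟨ξ, rfl⟩ : ∃ ξ, TensorProduct.dualDistrib k A (A ⊗[k] A) ξ = ψ :=
    ⟨(TensorProduct.dualDistribEquiv k A (A ⊗[k] A)).symm ψ,
      (TensorProduct.dualDistribEquiv k A (A ⊗[k] A)).apply_symm_apply ψ⟩
  induction ξ using TensorProduct.induction_on with
  | zero => simp
  | add u v hu hv => simp only [map_add, LinearMap.add_apply, hu, hv, add_zero]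
  | tmul g η =>
    obtain ⟨ζ, rfl⟩ : ∃ ζ, TensorProduct.dualDistrib k A A ζ = η :=
      ⟨(TensorProduct.dualDistribEquiv k A A).symm η,
        (TensorProduct.dualDistribEquiv k A A).apply_symm_apply η⟩
    induction ζ using TensorProduct.induction_on with
    | zero => simp
    | add u v hu hv =>
      rw [map_add, tmul_add, map_add, LinearMap.add_apply, hu, hv, add_zero]
    | tmul h l => exact ht g h l

end Aux

theorem stmt17 {A : Type v} [AddCommGroup A] [Module k A] [FiniteDimensional k A]
    (hchar : (2 : k) ≠ 0) (p s : A →ₗ[k] A →ₗ[k] A) (h : IsPreAlt p s)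
    (r : A ⊗[k] A) (hsymm : TensorProduct.comm k A A r = r)
    (f : A →ₗ[k] Module.Dual k A)
    (hf1 : ∀ x : A, Tr r (f x) = x) (hf2 : ∀ g : Module.Dual k A, f (Tr r g) = g) :
    (PA11 p s r = 0 ∧ PA12 p s r = 0 ∧ PA21 p s r = 0 ∧
      PA22 p s r = 0 ∧ PA31 p s r = 0 ∧ PA32 p s r = 0) ↔
    (∀ x y z : A, f (p x y + s x y) z = f x (s y z) + f y (p z x)) := by
  have hsurj : ∀ g : Module.Dual k A, ∃ x : A, f x = g := fun g => ⟨Tr r g, hf2 g⟩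
  have hBsymm : ∀ x y : A, f x y = f y x := by
    intro x y
    conv_lhs => rw [← hf1 y]
    rw [Tr_comm_pair, hsymm, hf1]
  have e1 : ∀ (m : A →ₗ[k] A →ₗ[k] A) (x y z : A),
      φ3 (f x) (f y) (f z) (comp12_13 m (r ⊗ₜ r)) = f x (m y z) := by
    intro m x y z; rw [φ3_comp12_13, hf1, hf1]
  have e2 : ∀ (m : A →ₗ[k] A →ₗ[k] A) (x y z : A),
      φ3 (f x) (f y) (f z) (comp13_12 m (r ⊗ₜ r)) = f x (m z y) := by
    intro m x y z; rw [φ3_comp13_12, hf1, hf1]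
  have e3 : ∀ (m : A →ₗ[k] A →ₗ[k] A) (x y z : A),
      φ3 (f x) (f y) (f z) (comp12_23 m (r ⊗ₜ r)) = f y (m x z) := by
    intro m x y z; rw [φ3_comp12_23, hsymm, hf1, hf1]
  have e4 : ∀ (m : A →ₗ[k] A →ₗ[k] A) (x y z : A),
      φ3 (f x) (f y) (f z) (comp23_12 m (r ⊗ₜ r)) = f y (m z x) := by
    intro m x y z; rw [φ3_comp23_12, hsymm, hf1, hf1]
  have e5 : ∀ (m : A →ₗ[k] A →ₗ[k] A) (x y z : A),
      φ3 (f x) (f y) (f z) (comp13_23 m (r ⊗ₜ r)) = f z (m x y) := by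
    intro m x y z; rw [φ3_comp13_23, hsymm, hf1, hf1]
  have e6 : ∀ (m : A →ₗ[k] A →ₗ[k] A) (x y z : A),
      φ3 (f x) (f y) (f z) (comp23_13 m (r ⊗ₜ r)) = f z (m y x) := by
    intro m x y z; rw [φ3_comp23_13, hsymm, hf1, hf1]
  constructor
  · rintro ⟨h11, -, -, -, -, -⟩ x y z
    have h0 : φ3 (f z) (f x) (f y) (PA11 p s r) = 0 := by rw [h11]; simp
    rw [PA11, map_sub, map_sub, e1 (p + s) z x y, e4 s z x y, e5 p z x y] at h0
    rw [hBsymm (p x y + s x y) z]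
    simp only [LinearMap.add_apply, map_add] at h0 ⊢
    linear_combination h0
  · intro hc
    have hc2 : ∀ x y z : A, f x (p y z) + f x (s y z) = f y (s z x) + f z (p x y) := by
      intro x y z
      have h0 := hc y z x
      rw [hBsymm (p y z + s y z) x, map_add] at h0
      exact h0
    refine ⟨?_, ?_, ?_, ?_, ?_, ?_⟩
    · apply φ3_sep
      intro g h l
      obtain ⟨x, rfl⟩ := hsurj g; obtain ⟨y, rfl⟩ := hsurj h; obtain ⟨z, rfl⟩ := hsurj l
      simp only [PA11, map_sub, e1, e4, e5, LinearMap.add_apply, map_add]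
      linear_combination hc2 x y z
    · apply φ3_sep
      intro g h l
      obtain ⟨x, rfl⟩ := hsurj g; obtain ⟨y, rfl⟩ := hsurj h; obtain ⟨z, rfl⟩ := hsurj l
      simp only [PA12, map_sub, e2, e3, e6, LinearMap.add_apply, map_add]
      linear_combination hc2 x z y
    · apply φ3_sep
      intro g h l
      obtain ⟨x, rfl⟩ := hsurj g; obtain ⟨y, rfl⟩ := hsurj h; obtain ⟨z, rfl⟩ := hsurj l
      simp only [PA21, map_sub, e3, e6, e2, LinearMap.add_apply, map_add]
      linear_combination hc2 y x z
    · apply φ3_sep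
      intro g h l
      obtain ⟨x, rfl⟩ := hsurj g; obtain ⟨y, rfl⟩ := hsurj h; obtain ⟨z, rfl⟩ := hsurj l
      simp only [PA22, map_sub, e4, e5, e1, LinearMap.add_apply, map_add]
      linear_combination hc2 y z x
    · apply φ3_sep
      intro g h l
      obtain ⟨x, rfl⟩ := hsurj g; obtain ⟨y, rfl⟩ := hsurj h; obtain ⟨z, rfl⟩ := hsurj l
      simp only [PA31, map_sub, e5, e1, e4, LinearMap.add_apply, map_add]
      linear_combination hc2 z x y
    · apply φ3_sep
      intro g h l
      obtain ⟨x, rfl⟩ := hsurj g; obtain ⟨y, rfl⟩ := hsurj h; obtain ⟨z, rfl⟩ := hsurj l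
      simp only [PA32, map_sub, e6, e2, e3, LinearMap.add_apply, map_add]
      linear_combination hc2 z y x
end

section
/- Let (A,≺,≻) be a finite-dimensional pre-alternative algebra over a field of characteristic ≠ 2 with basis {e₁,…,eₙ} and dual basis {e₁*,…,eₙ*} of A*. The space Â = A⊕A* with products (x+a*) ≺' (y+b*) = x≺y + l_≻*(y)a* and (x+a*) ≻' (y+b*) = x≻y + r_≺*(x)b* is a pre-alternative algebra (the semidirect sum A⋉_{0, l_≻*, r_≺*, 0}A*), and r = Σᵢ (eᵢ⊗eᵢ* + eᵢ*⊗eᵢ) ∈ Â⊗Â is a nondegenerate symmetric solution of the PA-equations in Â; moreover the bilinear form 𝓑(u,v) = ⟨T_r⁻¹(u), v⟩ induced by r is 𝓑(x+a*, y+b*) = ⟨x, b*⟩ + ⟨a*, y⟩, which is a 2-cocycle of Â. -/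
open TensorProduct

universe u v w

variable {k : Type u} [Field k]

/-- The `≺` product of the semidirect sum `A ⋉_{0, l_≻*, r_≺*, 0} A*`. -/
noncomputable def sdPreP {A : Type v} [AddCommGroup A] [Module k A]
    (p s : A →ₗ[k] A →ₗ[k] A) :
    (A × Module.Dual k A) →ₗ[k] (A × Module.Dual k A) →ₗ[k] (A × Module.Dual k A) :=
  LinearMap.mk₂ k (fun u v => (p u.1 v.1, dualT s v.1 u.2))
    (fun u u' v => by refine Prod.ext ?_ ?_ <;> simp [map_add])
    (fun c u v => by refine Prod.ext ?_ ?_ <;> simp [map_smul])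
    (fun u v v' => by refine Prod.ext ?_ ?_ <;> simp [map_add])
    (fun c u v => by refine Prod.ext ?_ ?_ <;> simp [map_smul])

/-- The `≻` product of the semidirect sum `A ⋉_{0, l_≻*, r_≺*, 0} A*`. -/
noncomputable def sdPreS {A : Type v} [AddCommGroup A] [Module k A]
    (p s : A →ₗ[k] A →ₗ[k] A) :
    (A × Module.Dual k A) →ₗ[k] (A × Module.Dual k A) →ₗ[k] (A × Module.Dual k A) :=
  LinearMap.mk₂ k (fun u v => (s u.1 v.1, dualT p.flip u.1 v.2))
    (fun u u' v => by refine Prod.ext ?_ ?_ <;> simp [map_add])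
    (fun c u v => by refine Prod.ext ?_ ?_ <;> simp [map_smul])
    (fun u v v' => by refine Prod.ext ?_ ?_ <;> simp [map_add])
    (fun c u v => by refine Prod.ext ?_ ?_ <;> simp [map_smul])

/-!
The form `𝓑(x + a*, y + b*) = ⟨x, b*⟩ + ⟨a*, y⟩` is inverse to `T_r`, and a direct computation
shows that it is a 2-cocycle of the semidirect sum. For any symmetric `r` with `T_r⁻¹ = 𝓑`,
pairing `r₁₂ ⋄ r₁₃` and its five relatives with `f ⊗ g ⊗ h` gives expressions like
`f (T_r g ⋄ T_r h)`; writing `f = 𝓑 x`, `g = 𝓑 y`, `h = 𝓑 z`, each PA-equation becomes the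
2-cocycle identity `𝓑(y ∘ z, x) = 𝓑(y, z ≻ x) + 𝓑(z, x ≺ y)` for a permutation of `x, y, z`, and
such triple pairings separate the points of a triple tensor product.

The dual components of the associators of the semidirect sum are, up to sign, associators of `A`
with permuted arguments, and the linearised axioms of `A` identify them.
-/

section TensorLegs

variable {M : Type v} [AddCommGroup M] [Module k M] (m : M →ₗ[k] M →ₗ[k] M) (x y z w : M)

@[simp] lemma comp12_13_tmul : comp12_13 m ((x ⊗ₜ y) ⊗ₜ (z ⊗ₜ w)) = m x z ⊗ₜ (y ⊗ₜ w) := by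
  simp [comp12_13, tlift]

@[simp] lemma comp13_12_tmul : comp13_12 m ((x ⊗ₜ y) ⊗ₜ (z ⊗ₜ w)) = m x z ⊗ₜ (w ⊗ₜ y) := by
  simp [comp13_12, tlift]

@[simp] lemma comp12_23_tmul : comp12_23 m ((x ⊗ₜ y) ⊗ₜ (z ⊗ₜ w)) = x ⊗ₜ (m y z ⊗ₜ w) := by
  simp [comp12_23, tlift]

@[simp] lemma comp23_12_tmul : comp23_12 m ((x ⊗ₜ y) ⊗ₜ (z ⊗ₜ w)) = z ⊗ₜ (m x w ⊗ₜ y) := by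
  simp [comp23_12, tlift]

@[simp] lemma comp13_23_tmul : comp13_23 m ((x ⊗ₜ y) ⊗ₜ (z ⊗ₜ w)) = x ⊗ₜ (z ⊗ₜ m y w) := by
  simp [comp13_23, tlift]

@[simp] lemma comp23_13_tmul : comp23_13 m ((x ⊗ₜ y) ⊗ₜ (z ⊗ₜ w)) = z ⊗ₜ (x ⊗ₜ m y w) := by
  simp [comp23_13, tlift]

end TensorLegs

section Pairing

variable {B : Type v} [AddCommGroup B] [Module k B]

noncomputable def eval₃ (f g h : Module.Dual k B) : Module.Dual k (B ⊗[k] (B ⊗[k] B)) :=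
  dualDistrib k B (B ⊗[k] B) (f ⊗ₜ dualDistrib k B B (g ⊗ₜ h))

@[simp] lemma eval₃_tmul (f g h : Module.Dual k B) (x y z : B) :
    eval₃ f g h (x ⊗ₜ (y ⊗ₜ z)) = f x * (g y * h z) := rfl

lemma eq_zero_of_forall_eval₃ [FiniteDimensional k B] {t : B ⊗[k] (B ⊗[k] B)}
    (ht : ∀ f g h, eval₃ f g h t = 0) : t = 0 := by
  rw [← Module.forall_dual_apply_eq_zero_iff k t]
  intro Φ
  obtain ⟨ξ, rfl⟩ := (dualDistribEquiv k B (B ⊗[k] B)).surjective Φ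
  induction ξ using TensorProduct.induction_on with
  | zero => simp
  | add ξ ξ' hξ hξ' => simp_all
  | tmul f Ψ =>
    obtain ⟨η, rfl⟩ := (dualDistribEquiv k B B).surjective Ψ
    induction η using TensorProduct.induction_on with
    | zero => simp
    | add η η' hη hη' => simp_all [tmul_add]
    | tmul g h => exact ht f g h

@[simp] lemma Tr_tmul_s19 (x y : B) (f : Module.Dual k B) : Tr (x ⊗ₜ[k] y) f = f y • x := by
  simp [Tr]

lemma apply_Tr_comm (r : B ⊗[k] B) (f g : Module.Dual k B) :
    f (Tr (TensorProduct.comm k B B r) g) = g (Tr r f) := by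
  induction r using TensorProduct.induction_on with
  | zero => simp
  | add r r' hr hr' => simp [hr, hr']
  | tmul x y => simp [mul_comm]

variable (m : B →ₗ[k] B →ₗ[k] B) (r r' : B ⊗[k] B) (f g h : Module.Dual k B)

lemma eval₃_apply_tmul_of_tmul {C : (B ⊗[k] B) ⊗[k] (B ⊗[k] B) →ₗ[k] B ⊗[k] (B ⊗[k] B)}
    {Φ : B ⊗[k] B →ₗ[k] B ⊗[k] B →ₗ[k] k}
    (hC : ∀ x y z w, eval₃ f g h (C ((x ⊗ₜ y) ⊗ₜ (z ⊗ₜ w))) = Φ (x ⊗ₜ y) (z ⊗ₜ w)) :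
    eval₃ f g h (C (r ⊗ₜ r')) = Φ r r' := by
  have : eval₃ f g h ∘ₗ C = lift Φ := ext_fourfold' fun x y z w => by simpa using hC x y z w
  simpa using LinearMap.congr_fun this (r ⊗ₜ r')

lemma eval₃_comp12_13 : eval₃ f g h (comp12_13 m (r ⊗ₜ r')) = f (m (Tr r g) (Tr r' h)) :=
  eval₃_apply_tmul_of_tmul r r' f g h (Φ := (m.compl₁₂ (Tr.flip g) (Tr.flip h)).compr₂ f)
    fun x y z w => by simp [mul_assoc, mul_comm, mul_left_comm]

lemma eval₃_comp13_12 : eval₃ f g h (comp13_12 m (r ⊗ₜ r')) = f (m (Tr r h) (Tr r' g)) :=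
  eval₃_apply_tmul_of_tmul r r' f g h (Φ := (m.compl₁₂ (Tr.flip h) (Tr.flip g)).compr₂ f)
    fun x y z w => by simp [mul_assoc, mul_comm]

lemma eval₃_comp12_23 :
    eval₃ f g h (comp12_23 m (r ⊗ₜ r')) = g (m (Tr (TensorProduct.comm k B B r) f) (Tr r' h)) :=
  eval₃_apply_tmul_of_tmul r r' f g h
    (Φ := (m.compl₁₂ (Tr.flip f ∘ₗ (TensorProduct.comm k B B).toLinearMap) (Tr.flip h)).compr₂ g)
    fun x y z w => by simp [mul_comm, mul_left_comm]

lemma eval₃_comp23_12 :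
    eval₃ f g h (comp23_12 m (r ⊗ₜ r')) = g (m (Tr r h) (Tr (TensorProduct.comm k B B r') f)) :=
  eval₃_apply_tmul_of_tmul r r' f g h
    (Φ := (m.compl₁₂ (Tr.flip h) (Tr.flip f ∘ₗ (TensorProduct.comm k B B).toLinearMap)).compr₂ g)
    fun x y z w => by simp [mul_comm]

lemma eval₃_comp13_23 : eval₃ f g h (comp13_23 m (r ⊗ₜ r')) =
    h (m (Tr (TensorProduct.comm k B B r) f) (Tr (TensorProduct.comm k B B r') g)) :=
  eval₃_apply_tmul_of_tmul r r' f g h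
    (Φ := (m.compl₁₂ (Tr.flip f ∘ₗ (TensorProduct.comm k B B).toLinearMap)
      (Tr.flip g ∘ₗ (TensorProduct.comm k B B).toLinearMap)).compr₂ h)
    fun x y z w => by simp [mul_left_comm]

lemma eval₃_comp23_13 : eval₃ f g h (comp23_13 m (r ⊗ₜ r')) =
    h (m (Tr (TensorProduct.comm k B B r) g) (Tr (TensorProduct.comm k B B r') f)) :=
  eval₃_apply_tmul_of_tmul r r' f g h
    (Φ := (m.compl₁₂ (Tr.flip g ∘ₗ (TensorProduct.comm k B B).toLinearMap)
      (Tr.flip f ∘ₗ (TensorProduct.comm k B B).toLinearMap)).compr₂ h)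
    fun x y z w => by simp

end Pairing

def IsTwoCocycle {B : Type v} [AddCommGroup B] [Module k B] (p s : B →ₗ[k] B →ₗ[k] B)
    (𝓑 : B →ₗ[k] Module.Dual k B) : Prop :=
  ∀ x y z, 𝓑 (p x y + s x y) z = 𝓑 x (s y z) + 𝓑 y (p z x)

theorem pa_eq_zero_of_isTwoCocycle {B : Type v} [AddCommGroup B] [Module k B]
    [FiniteDimensional k B] {p s : B →ₗ[k] B →ₗ[k] B} {r : B ⊗[k] B}
    (hr : TensorProduct.comm k B B r = r) {𝓑 : B →ₗ[k] Module.Dual k B}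
    (hleft : Function.LeftInverse 𝓑 (Tr r)) (hright : Function.RightInverse 𝓑 (Tr r))
    (hcocycle : IsTwoCocycle p s 𝓑) :
    PA11 p s r = 0 ∧ PA12 p s r = 0 ∧ PA21 p s r = 0 ∧ PA22 p s r = 0 ∧
      PA31 p s r = 0 ∧ PA32 p s r = 0 := by
  have hT (u : B) : Tr r (𝓑 u) = u := hright u
  have symm (u v : B) : 𝓑 u v = 𝓑 v u := by
    calc 𝓑 u v = 𝓑 u (Tr (TensorProduct.comm k B B r) (𝓑 v)) := by rw [hr, hT]
      _ = 𝓑 v u := by rw [apply_Tr_comm, hT]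
  have cyclic (x y z : B) : 𝓑 x (p y z + s y z) = 𝓑 y (s z x) + 𝓑 z (p x y) := by
    rw [symm, hcocycle]
  have eq_zero {t : B ⊗[k] (B ⊗[k] B)} (ht : ∀ x y z, eval₃ (𝓑 x) (𝓑 y) (𝓑 z) t = 0) : t = 0 :=
    eq_zero_of_forall_eval₃ fun f g h => by rw [← hleft f, ← hleft g, ← hleft h]; exact ht _ _ _
  refine ⟨eq_zero fun x y z => ?_, eq_zero fun x y z => ?_, eq_zero fun x y z => ?_,
    eq_zero fun x y z => ?_, eq_zero fun x y z => ?_, eq_zero fun x y z => ?_⟩ <;>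
  simp only [PA11, PA12, PA21, PA22, PA31, PA32, map_sub, eval₃_comp12_13, eval₃_comp13_12,
    eval₃_comp12_23, eval₃_comp23_12, eval₃_comp13_23, eval₃_comp23_13, hr, hT,
    LinearMap.add_apply, cyclic] <;> abel

section DualExtension

variable {A : Type v} [AddCommGroup A] [Module k A]

local notation "Â" => A × Module.Dual k A

noncomputable def dualPairing : Â →ₗ[k] Module.Dual k Â :=
  LinearMap.mk₂ k (fun u v => v.2 u.1 + u.2 v.1)
    (fun _ _ _ => by simp only [Prod.fst_add, Prod.snd_add, map_add, LinearMap.add_apply]; abel)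
    (fun _ _ _ => by simp [mul_add])
    (fun _ _ _ => by simp only [Prod.fst_add, Prod.snd_add, map_add, LinearMap.add_apply]; abel)
    (fun _ _ _ => by simp [mul_add])

@[simp] lemma dualPairing_apply (u v : Â) : dualPairing u v = v.2 u.1 + u.2 v.1 := rfl

lemma isTwoCocycle_dualPairing (p s : A →ₗ[k] A →ₗ[k] A) :
    IsTwoCocycle (sdPreP p s) (sdPreS p s) dualPairing := by
  intro x y z
  simp [sdPreP, sdPreS, dualT, Module.Dual.transpose_apply]
  ring

variable {ι : Type*} [Fintype ι] (b : Module.Basis ι k A)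

noncomputable def canonicalTensor : Â ⊗[k] Â :=
  ∑ i, (LinearMap.inl k A (Module.Dual k A) (b i) ⊗ₜ[k]
      LinearMap.inr k A (Module.Dual k A) (b.coord i) +
    LinearMap.inr k A (Module.Dual k A) (b.coord i) ⊗ₜ[k]
      LinearMap.inl k A (Module.Dual k A) (b i))

lemma comm_canonicalTensor : TensorProduct.comm k Â Â (canonicalTensor b) = canonicalTensor b := by
  simp only [canonicalTensor, map_sum, map_add, comm_tmul, add_comm]

lemma Tr_canonicalTensor (f : Module.Dual k Â) :
    Tr (canonicalTensor b) f = (∑ i, f (0, b.coord i) • b i, ∑ i, f (b i, 0) • b.coord i) := by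
  ext <;> simp [canonicalTensor, Prod.fst_sum, Prod.snd_sum]

lemma Tr_canonicalTensor_dualPairing (u : Â) : Tr (canonicalTensor b) (dualPairing u) = u := by
  rw [Tr_canonicalTensor]
  ext
  · simp [b.sum_repr u.1]
  · simp [b.sum_dual_apply_smul_coord u.2]

lemma dualPairing_Tr_canonicalTensor (f : Module.Dual k Â) :
    dualPairing (Tr (canonicalTensor b) f) = f := by
  refine LinearMap.prod_ext (LinearMap.ext fun x => ?_) (LinearMap.ext fun a => ?_)
  · change _ = f (LinearMap.inl k A (Module.Dual k A) x)
    conv_rhs => rw [← b.sum_repr x]; simp only [map_sum, map_smul, smul_eq_mul]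
    simp [Tr_canonicalTensor, mul_comm]
  · change _ = f (LinearMap.inr k A (Module.Dual k A) a)
    conv_rhs => rw [← b.sum_dual_apply_smul_coord a]; simp only [map_sum, map_smul, smul_eq_mul]
    simp [Tr_canonicalTensor, mul_comm]

end DualExtension

section Associators

variable {A : Type v} [AddCommGroup A] [Module k A] (p s : A →ₗ[k] A →ₗ[k] A)

lemma rAssoc_add_rAssoc_swap (hr : ∀ x y : A, rAssoc p s y x x = 0) (y x z : A) :
    rAssoc p s y x z + rAssoc p s y z x = 0 := by
  have h := hr (x + z) y
  simp only [rAssoc, map_add, LinearMap.add_apply] at hr h ⊢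
  linear_combination (norm := module) h - hr x y - hr z y

lemma lAssoc_add_lAssoc_swap (hl : ∀ x y : A, lAssoc p s x x y = 0) (x z y : A) :
    lAssoc p s x z y + lAssoc p s z x y = 0 := by
  have h := hl (x + z) y
  simp only [lAssoc, map_add, LinearMap.add_apply] at hl h ⊢
  linear_combination (norm := module) h - hl x y - hl z y

variable {p s}

lemma IsPreAlt.mAssoc_eq_lAssoc (h : IsPreAlt p s) (x z w : A) :
    mAssoc p s z w x = lAssoc p s x z w := by
  linear_combination (norm := module) h.2.1 z w x - lAssoc_add_lAssoc_swap p s h.2.2.2 z x w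

lemma IsPreAlt.mAssoc_eq_rAssoc (h : IsPreAlt p s) (x z w : A) :
    mAssoc p s z w x = rAssoc p s w x z := by
  linear_combination (norm := module) h.1 z w x - rAssoc_add_rAssoc_swap p s h.2.2.1 w z x

variable (p s) (U V W : A × Module.Dual k A)

@[simp] lemma mAssoc_sdPre_fst :
    (mAssoc (sdPreP p s) (sdPreS p s) U V W).1 = mAssoc p s U.1 V.1 W.1 := by
  simp [mAssoc, sdPreP, sdPreS]

@[simp] lemma rAssoc_sdPre_fst :
    (rAssoc (sdPreP p s) (sdPreS p s) U V W).1 = rAssoc p s U.1 V.1 W.1 := by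
  simp [rAssoc, sdPreP, sdPreS]

@[simp] lemma lAssoc_sdPre_fst :
    (lAssoc (sdPreP p s) (sdPreS p s) U V W).1 = lAssoc p s U.1 V.1 W.1 := by
  simp [lAssoc, sdPreP, sdPreS]

@[simp] lemma mAssoc_sdPre_snd (z : A) :
    (mAssoc (sdPreP p s) (sdPreS p s) U V W).2 z = V.2 (mAssoc p s W.1 z U.1) := by
  simp [mAssoc, sdPreP, sdPreS, dualT, Module.Dual.transpose_apply]

@[simp] lemma rAssoc_sdPre_snd (z : A) :
    (rAssoc (sdPreP p s) (sdPreS p s) U V W).2 z = -U.2 (lAssoc p s V.1 W.1 z) := by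
  simp [rAssoc, lAssoc, sdPreP, sdPreS, dualT, Module.Dual.transpose_apply]

@[simp] lemma lAssoc_sdPre_snd (z : A) :
    (lAssoc (sdPreP p s) (sdPreS p s) U V W).2 z = -W.2 (rAssoc p s z U.1 V.1) := by
  simp [lAssoc, rAssoc, sdPreP, sdPreS, dualT, Module.Dual.transpose_apply]

variable {p s}

theorem IsPreAlt.sdPre (h : IsPreAlt p s) : IsPreAlt (sdPreP p s) (sdPreS p s) := by
  refine ⟨fun U V W => Prod.ext ?_ (LinearMap.ext fun z => ?_),
    fun U V W => Prod.ext ?_ (LinearMap.ext fun z => ?_),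
    fun U V => Prod.ext ?_ (LinearMap.ext fun z => ?_),
    fun U V => Prod.ext ?_ (LinearMap.ext fun z => ?_)⟩
  · simpa using h.1 U.1 V.1 W.1
  · simp [h.mAssoc_eq_lAssoc]
  · simpa using h.2.1 U.1 V.1 W.1
  · simp [h.mAssoc_eq_rAssoc]
  · simpa using h.2.2.1 U.1 V.1
  · simp [h.2.2.2]
  · simpa using h.2.2.2 U.1 V.1
  · simp [h.2.2.1]

end Associators

theorem stmt19_general {A : Type v} {ι : Type*} [Fintype ι] [AddCommGroup A] [Module k A]
    [FiniteDimensional k A]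
    (p s : A →ₗ[k] A →ₗ[k] A) (h : IsPreAlt p s) (b : Module.Basis ι k A)
    (rr : (A × Module.Dual k A) ⊗[k] (A × Module.Dual k A))
    (hrr : rr = ∑ i : ι,
      ((LinearMap.inl k A (Module.Dual k A)) (b i) ⊗ₜ[k]
          (LinearMap.inr k A (Module.Dual k A)) (b.coord i) +
        (LinearMap.inr k A (Module.Dual k A)) (b.coord i) ⊗ₜ[k]
          (LinearMap.inl k A (Module.Dual k A)) (b i))) :
    IsPreAlt (sdPreP p s) (sdPreS p s) ∧
    Function.Bijective (Tr rr) ∧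
    TensorProduct.comm k (A × Module.Dual k A) (A × Module.Dual k A) rr = rr ∧
    PA11 (sdPreP p s) (sdPreS p s) rr = 0 ∧
    PA12 (sdPreP p s) (sdPreS p s) rr = 0 ∧
    PA21 (sdPreP p s) (sdPreS p s) rr = 0 ∧
    PA22 (sdPreP p s) (sdPreS p s) rr = 0 ∧
    PA31 (sdPreP p s) (sdPreS p s) rr = 0 ∧
    PA32 (sdPreP p s) (sdPreS p s) rr = 0 ∧
    (∀ (u v : A × Module.Dual k A) (f : Module.Dual k (A × Module.Dual k A)),
      Tr rr f = u → f v = v.2 u.1 + u.2 v.1) ∧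
    (∀ u v w : A × Module.Dual k A,
      ((sdPreP p s u v + sdPreS p s u v).2 w.1 + w.2 (sdPreP p s u v + sdPreS p s u v).1) =
        ((sdPreS p s v w).2 u.1 + u.2 (sdPreS p s v w).1) +
        ((sdPreP p s w u).2 v.1 + v.2 (sdPreP p s w u).1)) := by
  change rr = canonicalTensor b at hrr
  subst hrr
  have hleft : Function.LeftInverse dualPairing (Tr (canonicalTensor b)) :=
    dualPairing_Tr_canonicalTensor b
  have hright : Function.RightInverse dualPairing (Tr (canonicalTensor b)) :=
    Tr_canonicalTensor_dualPairing b
  have hcocycle := isTwoCocycle_dualPairing p s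
  obtain ⟨h11, h12, h21, h22, h31, h32⟩ :=
    pa_eq_zero_of_isTwoCocycle (comm_canonicalTensor b) hleft hright hcocycle
  refine ⟨h.sdPre, Function.bijective_iff_has_inverse.mpr ⟨dualPairing, hleft, hright⟩,
    comm_canonicalTensor b, h11, h12, h21, h22, h31, h32, fun u v f hf => ?_, fun u v w => ?_⟩
  · rw [← hleft f, hf, dualPairing_apply]
  · rw [add_comm]
    exact hcocycle u v w

theorem stmt19 {A : Type v} {ι : Type*} [Fintype ι] [AddCommGroup A] [Module k A]
    [FiniteDimensional k A] (hchar : (2 : k) ≠ 0)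
    (p s : A →ₗ[k] A →ₗ[k] A) (h : IsPreAlt p s) (b : Module.Basis ι k A)
    (rr : (A × Module.Dual k A) ⊗[k] (A × Module.Dual k A))
    (hrr : rr = ∑ i : ι,
      ((LinearMap.inl k A (Module.Dual k A)) (b i) ⊗ₜ[k]
          (LinearMap.inr k A (Module.Dual k A)) (b.coord i) +
        (LinearMap.inr k A (Module.Dual k A)) (b.coord i) ⊗ₜ[k]
          (LinearMap.inl k A (Module.Dual k A)) (b i))) :
    IsPreAlt (sdPreP p s) (sdPreS p s) ∧
    Function.Bijective (Tr rr) ∧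
    TensorProduct.comm k (A × Module.Dual k A) (A × Module.Dual k A) rr = rr ∧
    PA11 (sdPreP p s) (sdPreS p s) rr = 0 ∧
    PA12 (sdPreP p s) (sdPreS p s) rr = 0 ∧
    PA21 (sdPreP p s) (sdPreS p s) rr = 0 ∧
    PA22 (sdPreP p s) (sdPreS p s) rr = 0 ∧
    PA31 (sdPreP p s) (sdPreS p s) rr = 0 ∧
    PA32 (sdPreP p s) (sdPreS p s) rr = 0 ∧
    (∀ (u v : A × Module.Dual k A) (f : Module.Dual k (A × Module.Dual k A)),
      Tr rr f = u → f v = v.2 u.1 + u.2 v.1) ∧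
    (∀ u v w : A × Module.Dual k A,
      ((sdPreP p s u v + sdPreS p s u v).2 w.1 + w.2 (sdPreP p s u v + sdPreS p s u v).1) =
        ((sdPreS p s v w).2 u.1 + u.2 (sdPreS p s v w).1) +
        ((sdPreP p s w u).2 v.1 + v.2 (sdPreP p s w u).1)) :=
  stmt19_general p s h b rr hrr
end
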